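/- Let K : ℝ^d → M_d(ℝ) be a uniformly elliptic smooth metric and let ψ : ℝ^d → ℝ be of class C_b^∞. For λ > 0 set φ = e^{λψ}, q_R(x,ξ) = ξᵀK(x)ξ − ∇φ(x)ᵀK(x)∇φ(x) and q_I(x,ξ) = 2∇φ(x)ᵀK(x)ξ. Then there exists a constant C > 0 (depending only on d, on the ellipticity constants of K, and on bounds for finitely many derivatives of K and ψ) such that for every λ ≥ 1 and every (x,ξ) ∈ ℝ^d × ℝ^d: {q_R, q_I}(x,ξ) ≥ λ⁴·e^{3λψ(x)}·(∇ψ(x)ᵀK(x)∇ψ(x))² − C·(‖ξ‖²·λ·e^{λψ(x)} + λ³·e^{3λψ(x)}). -/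

import Mathlib

/-- The Poisson bracket `{f, g}(x,ξ) = ∇_ξ f · ∇_x g − ∇_x f · ∇_ξ g` of two symbols
`f, g : ℝ^d × ℝ^d → ℝ`, written in the coordinates of `EuclideanSpace ℝ (Fin d)`. -/
noncomputable def poissonBracket {d : ℕ}
    (f g : EuclideanSpace ℝ (Fin d) → EuclideanSpace ℝ (Fin d) → ℝ)
    (x ξ : EuclideanSpace ℝ (Fin d)) : ℝ :=
  ∑ i : Fin d,
    (fderiv ℝ (f x) ξ (EuclideanSpace.single i 1) *
        fderiv ℝ (fun x' => g x' ξ) x (EuclideanSpace.single i 1) -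
      fderiv ℝ (fun x' => f x' ξ) x (EuclideanSpace.single i 1) *
        fderiv ℝ (g x) ξ (EuclideanSpace.single i 1))

/-- The quadratic form `ξᵀ K(x) ξ` associated to a metric `K`. -/
def quadForm {d : ℕ} (K : EuclideanSpace ℝ (Fin d) → Matrix (Fin d) (Fin d) ℝ)
    (x ξ : EuclideanSpace ℝ (Fin d)) : ℝ :=
  ∑ i, ∑ j, ξ i * K x i j * ξ j

/-- The Carleman weight `φ = e^{λψ}`. -/
noncomputable def carlemanWeight {d : ℕ} (ψ : EuclideanSpace ℝ (Fin d) → ℝ) (lam : ℝ)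
    (x : EuclideanSpace ℝ (Fin d)) : ℝ := Real.exp (lam * ψ x)

/-- The real part of the Carleman symbol: `q_R(x,ξ) = ξᵀK(x)ξ − ∇φ(x)ᵀK(x)∇φ(x)`. -/
noncomputable def carlemanQR {d : ℕ}
    (K : EuclideanSpace ℝ (Fin d) → Matrix (Fin d) (Fin d) ℝ)
    (ψ : EuclideanSpace ℝ (Fin d) → ℝ) (lam : ℝ)
    (x ξ : EuclideanSpace ℝ (Fin d)) : ℝ :=
  quadForm K x ξ - quadForm K x (gradient (carlemanWeight ψ lam) x)

/-- The imaginary part of the Carleman symbol: `q_I(x,ξ) = 2 ∇φ(x)ᵀK(x)ξ`. -/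
noncomputable def carlemanQI {d : ℕ}
    (K : EuclideanSpace ℝ (Fin d) → Matrix (Fin d) (Fin d) ℝ)
    (ψ : EuclideanSpace ℝ (Fin d) → ℝ) (lam : ℝ)
    (x ξ : EuclideanSpace ℝ (Fin d)) : ℝ :=
  2 * ∑ i, ∑ j, (gradient (carlemanWeight ψ lam) x) i * K x i j * ξ j

-- ==================== auxiliary definitions ====================

noncomputable def pD {d : ℕ} (ψ : EuclideanSpace ℝ (Fin d) → ℝ)
    (x : EuclideanSpace ℝ (Fin d)) (i : Fin d) : ℝ :=
  fderiv ℝ ψ x (EuclideanSpace.single i 1)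

noncomputable def ppD {d : ℕ} (ψ : EuclideanSpace ℝ (Fin d) → ℝ)
    (x : EuclideanSpace ℝ (Fin d)) (i k : Fin d) : ℝ :=
  fderiv ℝ (fun y => fderiv ℝ ψ y (EuclideanSpace.single i 1)) x (EuclideanSpace.single k 1)

noncomputable def dKD {d : ℕ} (K : EuclideanSpace ℝ (Fin d) → Matrix (Fin d) (Fin d) ℝ)
    (x : EuclideanSpace ℝ (Fin d)) (i j k : Fin d) : ℝ :=
  fderiv ℝ (fun y => K y i j) x (EuclideanSpace.single k 1)

noncomputable def vD {d : ℕ} (K : EuclideanSpace ℝ (Fin d) → Matrix (Fin d) (Fin d) ℝ)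
    (x ξ : EuclideanSpace ℝ (Fin d)) (k : Fin d) : ℝ := ∑ j, K x k j * ξ j

noncomputable def wD {d : ℕ} (K : EuclideanSpace ℝ (Fin d) → Matrix (Fin d) (Fin d) ℝ)
    (ψ : EuclideanSpace ℝ (Fin d) → ℝ) (x : EuclideanSpace ℝ (Fin d)) (k : Fin d) : ℝ :=
  ∑ i, pD ψ x i * K x i k

noncomputable def bD {d : ℕ} (K : EuclideanSpace ℝ (Fin d) → Matrix (Fin d) (Fin d) ℝ)
    (ψ : EuclideanSpace ℝ (Fin d) → ℝ) (x ξ : EuclideanSpace ℝ (Fin d)) : ℝ :=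
  ∑ i, ∑ j, pD ψ x i * K x i j * ξ j

noncomputable def QD {d : ℕ} (K : EuclideanSpace ℝ (Fin d) → Matrix (Fin d) (Fin d) ℝ)
    (ψ : EuclideanSpace ℝ (Fin d) → ℝ) (x : EuclideanSpace ℝ (Fin d)) : ℝ :=
  ∑ i, ∑ j, pD ψ x i * K x i j * pD ψ x j

noncomputable def RD {d : ℕ} (K : EuclideanSpace ℝ (Fin d) → Matrix (Fin d) (Fin d) ℝ)
    (ψ : EuclideanSpace ℝ (Fin d) → ℝ) (x ξ : EuclideanSpace ℝ (Fin d)) (k : Fin d) : ℝ :=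
  ∑ i, ∑ j, (ppD ψ x i k * K x i j + pD ψ x i * dKD K x i j k) * ξ j

noncomputable def SD {d : ℕ} (K : EuclideanSpace ℝ (Fin d) → Matrix (Fin d) (Fin d) ℝ)
    (x ξ : EuclideanSpace ℝ (Fin d)) (k : Fin d) : ℝ :=
  ∑ i, ∑ j, ξ i * dKD K x i j k * ξ j

noncomputable def UD {d : ℕ} (K : EuclideanSpace ℝ (Fin d) → Matrix (Fin d) (Fin d) ℝ)
    (ψ : EuclideanSpace ℝ (Fin d) → ℝ) (x : EuclideanSpace ℝ (Fin d)) (k : Fin d) : ℝ :=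
  ∑ i, ∑ j, (ppD ψ x i k * K x i j * pD ψ x j + pD ψ x i * dKD K x i j k * pD ψ x j
    + pD ψ x i * K x i j * ppD ψ x j k)

-- ==================== basic lemmas ====================

lemma grad_coord {d : ℕ} (f : EuclideanSpace ℝ (Fin d) → ℝ) (x : EuclideanSpace ℝ (Fin d))
    (i : Fin d) : gradient f x i = fderiv ℝ f x (EuclideanSpace.single i 1) := by
  have h : (inner ℝ (gradient f x) (EuclideanSpace.single i (1:ℝ)) : ℝ)
      = fderiv ℝ f x (EuclideanSpace.single i 1) := InnerProductSpace.toDual_symm_apply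
  rw [← h, EuclideanSpace.inner_single_right]; simp

lemma hasFDerivAt_weight {d : ℕ} (ψ : EuclideanSpace ℝ (Fin d) → ℝ)
    (hψ : Differentiable ℝ ψ) (lam : ℝ) (x : EuclideanSpace ℝ (Fin d)) :
    HasFDerivAt (carlemanWeight ψ lam) ((lam * Real.exp (lam * ψ x)) • fderiv ℝ ψ x) x := by
  have h1 : HasFDerivAt (fun y => lam * ψ y) (lam • fderiv ℝ ψ x) x :=
    ((hψ x).hasFDerivAt).const_mul lam
  have h2 := (Real.hasDerivAt_exp (lam * ψ x)).comp_hasFDerivAt x h1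
  rw [smul_smul, mul_comm (Real.exp (lam * ψ x)) lam] at h2; exact h2

lemma grad_weight {d : ℕ} (ψ : EuclideanSpace ℝ (Fin d) → ℝ)
    (hψ : Differentiable ℝ ψ) (lam : ℝ) (x : EuclideanSpace ℝ (Fin d)) :
    gradient (carlemanWeight ψ lam) x = (lam * Real.exp (lam * ψ x)) • gradient ψ x := by
  unfold gradient; rw [(hasFDerivAt_weight ψ hψ lam x).fderiv, map_smul]

lemma hasFDerivAt_coord {d : ℕ} (i : Fin d) (ξ : EuclideanSpace ℝ (Fin d)) :
    HasFDerivAt (fun ξ' : EuclideanSpace ℝ (Fin d) => ξ' i)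
      (EuclideanSpace.proj i : EuclideanSpace ℝ (Fin d) →L[ℝ] ℝ) ξ :=
  ContinuousLinearMap.hasFDerivAt (𝕜 := ℝ) (EuclideanSpace.proj i)

lemma hasFDerivAt_quad {d : ℕ} (A : Matrix (Fin d) (Fin d) ℝ) (ξ : EuclideanSpace ℝ (Fin d)) :
    HasFDerivAt (fun ξ' : EuclideanSpace ℝ (Fin d) => ∑ i, ∑ j, ξ' i * A i j * ξ' j)
      (∑ i, ∑ j, ((ξ i * A i j) • (EuclideanSpace.proj j : EuclideanSpace ℝ (Fin d) →L[ℝ] ℝ)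
        + (ξ j) • ((A i j) • (EuclideanSpace.proj i : EuclideanSpace ℝ (Fin d) →L[ℝ] ℝ)))) ξ := by
  apply HasFDerivAt.fun_sum; intro i _
  apply HasFDerivAt.fun_sum; intro j _
  exact ((hasFDerivAt_coord i ξ).mul_const (A i j)).mul (hasFDerivAt_coord j ξ)

lemma hasFDerivAt_lin {d : ℕ} (c : Fin d → ℝ) (ξ : EuclideanSpace ℝ (Fin d)) :
    HasFDerivAt (fun ξ' : EuclideanSpace ℝ (Fin d) => ∑ j, c j * ξ' j)
      (∑ j, (c j) • (EuclideanSpace.proj j : EuclideanSpace ℝ (Fin d) →L[ℝ] ℝ)) ξ := by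
  apply HasFDerivAt.fun_sum; intro j _
  exact (hasFDerivAt_coord j ξ).const_mul (c j)

lemma quadForm_smul {d : ℕ} (K : EuclideanSpace ℝ (Fin d) → Matrix (Fin d) (Fin d) ℝ)
    (x : EuclideanSpace ℝ (Fin d)) (c : ℝ) (v : EuclideanSpace ℝ (Fin d)) :
    quadForm K x (c • v) = c ^ 2 * quadForm K x v := by
  unfold quadForm
  rw [Finset.mul_sum]
  refine Finset.sum_congr rfl fun i _ => ?_
  rw [Finset.mul_sum]
  refine Finset.sum_congr rfl fun j _ => ?_
  simp [PiLp.smul_apply, smul_eq_mul]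
  ring

lemma diff_P {d : ℕ} (ψ : EuclideanSpace ℝ (Fin d) → ℝ) (hψ : ContDiff ℝ (⊤ : ℕ∞) ψ)
    (v : EuclideanSpace ℝ (Fin d)) :
    Differentiable ℝ (fun y => fderiv ℝ ψ y v) :=
  ((hψ.fderiv_right (m := (⊤ : ℕ∞)) (by exact_mod_cast le_top)).differentiable
    (by simp)).clm_apply (differentiable_const _)

lemma abs_fderiv_le {E : Type*} [NormedAddCommGroup E] [NormedSpace ℝ E]
    (f : E → ℝ) (x v : E) (hv : ‖v‖ ≤ 1) :
    |fderiv ℝ f x v| ≤ ‖iteratedFDeriv ℝ 1 f x‖ := by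
  have h : fderiv ℝ f x v = iteratedFDeriv ℝ 1 f x ![v] := by
    rw [iteratedFDeriv_one_apply]; simp
  rw [← Real.norm_eq_abs, h]
  calc ‖iteratedFDeriv ℝ 1 f x ![v]‖ ≤ ‖iteratedFDeriv ℝ 1 f x‖ * ∏ i, ‖(![v] : Fin 1 → E) i‖ :=
        (iteratedFDeriv ℝ 1 f x).le_opNorm _
    _ ≤ ‖iteratedFDeriv ℝ 1 f x‖ * 1 := by
        apply mul_le_mul_of_nonneg_left _ (norm_nonneg _)
        simp [hv]
    _ = _ := mul_one _

lemma abs_fderiv2_le {E : Type*} [NormedAddCommGroup E] [NormedSpace ℝ E]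
    (f : E → ℝ) (hf : ContDiff ℝ (⊤ : ℕ∞) f) (x v w : E) (hv : ‖v‖ ≤ 1) (hw : ‖w‖ ≤ 1) :
    |fderiv ℝ (fun y => fderiv ℝ f y w) x v| ≤ ‖iteratedFDeriv ℝ 2 f x‖ := by
  have hdf : DifferentiableAt ℝ (fderiv ℝ f) x :=
    ((hf.fderiv_right (m := (⊤ : ℕ∞)) (by exact_mod_cast le_top)).differentiable
      (by simp)) x
  have h : fderiv ℝ (fun y => fderiv ℝ f y w) x v = iteratedFDeriv ℝ 2 f x ![v, w] := by
    rw [fderiv_clm_apply hdf (differentiableAt_const w)]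
    rw [iteratedFDeriv_two_apply]
    simp
  rw [← Real.norm_eq_abs, h]
  calc ‖iteratedFDeriv ℝ 2 f x ![v, w]‖
      ≤ ‖iteratedFDeriv ℝ 2 f x‖ * ∏ i, ‖(![v, w] : Fin 2 → E) i‖ :=
        (iteratedFDeriv ℝ 2 f x).le_opNorm _
    _ ≤ ‖iteratedFDeriv ℝ 2 f x‖ * 1 := by
        apply mul_le_mul_of_nonneg_left _ (norm_nonneg _)
        calc ∏ i, ‖(![v, w] : Fin 2 → E) i‖ = ‖v‖ * ‖w‖ := by
              simp [Fin.prod_univ_two]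
          _ ≤ 1 * 1 := mul_le_mul hv hw (norm_nonneg _) zero_le_one
          _ = 1 := mul_one 1
    _ = _ := mul_one _

lemma coord_le_norm {d : ℕ} (v : EuclideanSpace ℝ (Fin d)) (j : Fin d) : |v j| ≤ ‖v‖ := by
  rw [EuclideanSpace.norm_eq]
  have h1 : |v j| = Real.sqrt (|v j| ^ 2) := by
    rw [Real.sqrt_sq_eq_abs, abs_abs]
  rw [h1]
  apply Real.sqrt_le_sqrt
  exact Finset.single_le_sum (f := fun i => |v i| ^ 2) (fun i _ => sq_nonneg _)
    (Finset.mem_univ j)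

lemma absum {n : ℕ} (f : Fin n → ℝ) (c : ℝ) (h : ∀ k, |f k| ≤ c) :
    |∑ k, f k| ≤ (n : ℝ) * c := by
  calc |∑ k, f k| ≤ ∑ k, |f k| := Finset.abs_sum_le_sum_abs f Finset.univ
    _ ≤ ∑ _k : Fin n, c := Finset.sum_le_sum fun k _ => h k
    _ = (n : ℝ) * c := by simp [Finset.sum_const, mul_comm]

lemma abs_mul_le {x y X Y : ℝ} (hx : |x| ≤ X) (hy : |y| ≤ Y) : |x * y| ≤ X * Y := by
  rw [abs_mul]
  exact mul_le_mul hx hy (abs_nonneg _) ((abs_nonneg x).trans hx)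

-- ==================== the four derivatives ====================

lemma fderiv_qR_xi {d : ℕ} (K : EuclideanSpace ℝ (Fin d) → Matrix (Fin d) (Fin d) ℝ)
    (ψ : EuclideanSpace ℝ (Fin d) → ℝ) (lam : ℝ) (x ξ : EuclideanSpace ℝ (Fin d)) (k : Fin d) :
    fderiv ℝ (carlemanQR K ψ lam x) ξ (EuclideanSpace.single k 1)
    = (∑ i, ξ i * K x i k) + (∑ j, K x k j * ξ j) := by
  have hfun : carlemanQR K ψ lam x = fun ξ' =>
      (∑ i, ∑ j, ξ' i * K x i j * ξ' j) - quadForm K x (gradient (carlemanWeight ψ lam) x) :=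
    rfl
  rw [hfun, ((hasFDerivAt_quad (K x) ξ).sub_const _).fderiv]
  simp [ContinuousLinearMap.sum_apply, EuclideanSpace.single_apply, Finset.sum_add_distrib,
    mul_ite, Finset.sum_ite_eq, Finset.sum_ite_eq']
  exact Finset.sum_congr rfl fun _ _ => mul_comm _ _

lemma fderiv_qI_xi {d : ℕ} (K : EuclideanSpace ℝ (Fin d) → Matrix (Fin d) (Fin d) ℝ)
    (ψ : EuclideanSpace ℝ (Fin d) → ℝ) (hψ : Differentiable ℝ ψ)
    (lam : ℝ) (x ξ : EuclideanSpace ℝ (Fin d)) (k : Fin d) :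
    fderiv ℝ (carlemanQI K ψ lam x) ξ (EuclideanSpace.single k 1)
    = 2 * lam * Real.exp (lam * ψ x) *
        ∑ i, fderiv ℝ ψ x (EuclideanSpace.single i 1) * K x i k := by
  have hfun : carlemanQI K ψ lam x = fun ξ' : EuclideanSpace ℝ (Fin d) =>
      ∑ j, (2 * ∑ i, (gradient (carlemanWeight ψ lam) x) i * K x i j) * ξ' j := by
    funext ξ'
    unfold carlemanQI
    rw [Finset.sum_comm]
    rw [Finset.mul_sum]
    refine Finset.sum_congr rfl fun j _ => ?_
    simp only [Finset.mul_sum, Finset.sum_mul]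
    exact Finset.sum_congr rfl fun i _ => by ring
  rw [hfun, (hasFDerivAt_lin _ ξ).fderiv]
  simp only [ContinuousLinearMap.sum_apply, ContinuousLinearMap.smul_apply, smul_eq_mul,
    PiLp.proj_apply, EuclideanSpace.single_apply, mul_ite, mul_one, mul_zero,
    Finset.sum_ite_eq, Finset.sum_ite_eq', Finset.mem_univ, if_true]
  simp only [grad_weight ψ hψ lam x, PiLp.smul_apply, smul_eq_mul, grad_coord,
    (hasFDerivAt_weight ψ hψ lam x).fderiv, ContinuousLinearMap.smul_apply, Finset.mul_sum]
  refine Finset.sum_congr rfl fun i _ => ?_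
  ring

lemma fderiv_qI_x {d : ℕ} (K : EuclideanSpace ℝ (Fin d) → Matrix (Fin d) (Fin d) ℝ)
    (hK : ∀ i j : Fin d, ContDiff ℝ (⊤ : ℕ∞) fun x => K x i j)
    (ψ : EuclideanSpace ℝ (Fin d) → ℝ) (hψ : ContDiff ℝ (⊤ : ℕ∞) ψ)
    (lam : ℝ) (x ξ : EuclideanSpace ℝ (Fin d)) (k : Fin d) :
    fderiv ℝ (fun y => carlemanQI K ψ lam y ξ) x (EuclideanSpace.single k 1)
    = 2 * lam * Real.exp (lam * ψ x) * ∑ i, ∑ j,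
        (lam * fderiv ℝ ψ x (EuclideanSpace.single k 1) * fderiv ℝ ψ x (EuclideanSpace.single i 1)
            * K x i j
          + fderiv ℝ (fun y => fderiv ℝ ψ y (EuclideanSpace.single i 1)) x
              (EuclideanSpace.single k 1) * K x i j
          + fderiv ℝ ψ x (EuclideanSpace.single i 1)
              * fderiv ℝ (fun y => K y i j) x (EuclideanSpace.single k 1)) * ξ j := by
  have hψd : Differentiable ℝ ψ := hψ.differentiable (by simp)
  have hfun : (fun y => carlemanQI K ψ lam y ξ)
      = fun y => 2 * ∑ i, ∑ j,
          lam * carlemanWeight ψ lam y * fderiv ℝ ψ y (EuclideanSpace.single i 1)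
            * K y i j * ξ j := by
    funext y
    unfold carlemanQI
    congr 1
    refine Finset.sum_congr rfl fun i _ => Finset.sum_congr rfl fun j _ => ?_
    rw [grad_weight ψ hψd lam y]
    simp only [PiLp.smul_apply, smul_eq_mul, grad_coord, carlemanWeight]
  have hW := hasFDerivAt_weight ψ hψd lam x
  have hbig : HasFDerivAt (fun y => 2 * ∑ i : Fin d, ∑ j : Fin d,
      lam * carlemanWeight ψ lam y * fderiv ℝ ψ y (EuclideanSpace.single i 1)
        * K y i j * ξ j)
      ((2:ℝ) • ∑ i : Fin d, ∑ j : Fin d, (ξ j) •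
        ((lam * carlemanWeight ψ lam x * fderiv ℝ ψ x (EuclideanSpace.single i 1)) •
            fderiv ℝ (fun y => K y i j) x
          + K x i j • ((lam * carlemanWeight ψ lam x) •
              fderiv ℝ (fun y => fderiv ℝ ψ y (EuclideanSpace.single i 1)) x
            + fderiv ℝ ψ x (EuclideanSpace.single i 1) •
              (lam • ((lam * Real.exp (lam * ψ x)) • fderiv ℝ ψ x))))) x := by
    apply HasFDerivAt.const_mul
    apply HasFDerivAt.fun_sum
    intro i _
    apply HasFDerivAt.fun_sum
    intro j _
    exact (((hW.const_mul lam).mul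
        ((diff_P ψ hψ _ x).hasFDerivAt)).mul
        (((hK i j).differentiable (by simp)) x).hasFDerivAt).mul_const (ξ j)
  rw [hfun, hbig.fderiv]
  simp only [ContinuousLinearMap.smul_apply, ContinuousLinearMap.sum_apply,
    ContinuousLinearMap.add_apply, smul_eq_mul, Finset.mul_sum]
  refine Finset.sum_congr rfl fun i _ => Finset.sum_congr rfl fun j _ => ?_
  simp only [carlemanWeight]
  ring

lemma fderiv_qR_x {d : ℕ} (K : EuclideanSpace ℝ (Fin d) → Matrix (Fin d) (Fin d) ℝ)
    (hK : ∀ i j : Fin d, ContDiff ℝ (⊤ : ℕ∞) fun x => K x i j)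
    (ψ : EuclideanSpace ℝ (Fin d) → ℝ) (hψ : ContDiff ℝ (⊤ : ℕ∞) ψ)
    (lam : ℝ) (x ξ : EuclideanSpace ℝ (Fin d)) (k : Fin d) :
    fderiv ℝ (fun y => carlemanQR K ψ lam y ξ) x (EuclideanSpace.single k 1)
    = (∑ i, ∑ j, ξ i * fderiv ℝ (fun y => K y i j) x (EuclideanSpace.single k 1) * ξ j)
      - (2 * lam ^ 3 * Real.exp (lam * ψ x) ^ 2 * fderiv ℝ ψ x (EuclideanSpace.single k 1) *
          (∑ i, ∑ j, fderiv ℝ ψ x (EuclideanSpace.single i 1) * K x i j *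
            fderiv ℝ ψ x (EuclideanSpace.single j 1))
        + lam ^ 2 * Real.exp (lam * ψ x) ^ 2 *
          (∑ i, ∑ j,
            (fderiv ℝ (fun y => fderiv ℝ ψ y (EuclideanSpace.single i 1)) x
                (EuclideanSpace.single k 1) * K x i j *
                fderiv ℝ ψ x (EuclideanSpace.single j 1)
              + fderiv ℝ ψ x (EuclideanSpace.single i 1) *
                fderiv ℝ (fun y => K y i j) x (EuclideanSpace.single k 1) *
                fderiv ℝ ψ x (EuclideanSpace.single j 1)
              + fderiv ℝ ψ x (EuclideanSpace.single i 1) * K x i j *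
                fderiv ℝ (fun y => fderiv ℝ ψ y (EuclideanSpace.single j 1)) x
                  (EuclideanSpace.single k 1)))) := by
  have hψd : Differentiable ℝ ψ := hψ.differentiable (by simp)
  have hfun : (fun y => carlemanQR K ψ lam y ξ)
      = fun y => (∑ i, ∑ j, ξ i * K y i j * ξ j)
          - (lam * carlemanWeight ψ lam y) * (lam * carlemanWeight ψ lam y) *
            ∑ i, ∑ j, fderiv ℝ ψ y (EuclideanSpace.single i 1) * K y i j *
              fderiv ℝ ψ y (EuclideanSpace.single j 1) := by
    funext y
    unfold carlemanQR
    rw [grad_weight ψ hψd lam y, quadForm_smul, pow_two]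
    unfold quadForm carlemanWeight
    congr 2
    refine Finset.sum_congr rfl fun i _ => Finset.sum_congr rfl fun j _ => ?_
    rw [grad_coord, grad_coord]
  have hW := hasFDerivAt_weight ψ hψd lam x
  have hA : ∀ i j : Fin d, HasFDerivAt (fun y => K y i j)
      (fderiv ℝ (fun y => K y i j) x) x :=
    fun i j => (((hK i j).differentiable (by simp)) x).hasFDerivAt
  have hP : ∀ i : Fin d, HasFDerivAt (fun y => fderiv ℝ ψ y (EuclideanSpace.single i 1))
      (fderiv ℝ (fun y => fderiv ℝ ψ y (EuclideanSpace.single i 1)) x) x :=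
    fun i => (diff_P ψ hψ _ x).hasFDerivAt
  have h1 : HasFDerivAt (fun y => ∑ i : Fin d, ∑ j : Fin d, ξ i * K y i j * ξ j)
      (∑ i : Fin d, ∑ j : Fin d, (ξ j) • ((ξ i) • fderiv ℝ (fun y => K y i j) x)) x := by
    apply HasFDerivAt.fun_sum; intro i _
    apply HasFDerivAt.fun_sum; intro j _
    exact ((hA i j).const_mul (ξ i)).mul_const (ξ j)
  have hsq : HasFDerivAt (fun y => (lam * carlemanWeight ψ lam y) * (lam * carlemanWeight ψ lam y))
      ((lam * carlemanWeight ψ lam x) • (lam • ((lam * Real.exp (lam * ψ x)) • fderiv ℝ ψ x))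
        + (lam * carlemanWeight ψ lam x) • (lam • ((lam * Real.exp (lam * ψ x)) • fderiv ℝ ψ x))) x :=
    (hW.const_mul lam).mul (hW.const_mul lam)
  have hQf : HasFDerivAt (fun y => ∑ i : Fin d, ∑ j : Fin d,
      fderiv ℝ ψ y (EuclideanSpace.single i 1) * K y i j *
        fderiv ℝ ψ y (EuclideanSpace.single j 1))
      (∑ i : Fin d, ∑ j : Fin d,
        ((fderiv ℝ ψ x (EuclideanSpace.single i 1) * K x i j) •
            fderiv ℝ (fun y => fderiv ℝ ψ y (EuclideanSpace.single j 1)) x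
          + (fderiv ℝ ψ x (EuclideanSpace.single j 1)) •
            ((fderiv ℝ ψ x (EuclideanSpace.single i 1)) • fderiv ℝ (fun y => K y i j) x
              + (K x i j) • fderiv ℝ (fun y => fderiv ℝ ψ y (EuclideanSpace.single i 1)) x))) x := by
    apply HasFDerivAt.fun_sum; intro i _
    apply HasFDerivAt.fun_sum; intro j _
    exact ((hP i).mul (hA i j)).mul (hP j)
  have hbig := h1.fun_sub (hsq.fun_mul hQf)
  rw [hfun, hbig.fderiv]
  simp only [ContinuousLinearMap.sub_apply, ContinuousLinearMap.smul_apply,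
    ContinuousLinearMap.sum_apply, ContinuousLinearMap.add_apply, smul_eq_mul,
    Finset.mul_sum, Finset.sum_mul, carlemanWeight]
  rw [← Finset.sum_add_distrib]
  congr 1
  · exact Finset.sum_congr rfl fun i _ => Finset.sum_congr rfl fun j _ => by ring
  · rw [← Finset.sum_add_distrib]
    refine Finset.sum_congr rfl fun i _ => ?_
    rw [← Finset.sum_add_distrib, ← Finset.sum_add_distrib]
    refine Finset.sum_congr rfl fun j _ => ?_
    ring

-- ==================== derivatives in aux-def form ====================

lemma T1eq {d : ℕ} (K : EuclideanSpace ℝ (Fin d) → Matrix (Fin d) (Fin d) ℝ)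
    {x' : EuclideanSpace ℝ (Fin d)}
    (hsymm : (K x').IsSymm) (ψ : EuclideanSpace ℝ (Fin d) → ℝ) (lam : ℝ)
    (ξ : EuclideanSpace ℝ (Fin d)) (k : Fin d) :
    fderiv ℝ (carlemanQR K ψ lam x') ξ (EuclideanSpace.single k 1) = 2 * vD K x' ξ k := by
  rw [fderiv_qR_xi]
  unfold vD
  have h : ∑ i, ξ i * K x' i k = ∑ i, K x' k i * ξ i :=
    Finset.sum_congr rfl fun i _ => by rw [hsymm.apply, mul_comm]
  rw [h, two_mul]

lemma T4eq {d : ℕ} (K : EuclideanSpace ℝ (Fin d) → Matrix (Fin d) (Fin d) ℝ)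
    (ψ : EuclideanSpace ℝ (Fin d) → ℝ) (hψ : Differentiable ℝ ψ) (lam : ℝ)
    (x ξ : EuclideanSpace ℝ (Fin d)) (k : Fin d) :
    fderiv ℝ (carlemanQI K ψ lam x) ξ (EuclideanSpace.single k 1)
    = 2 * lam * Real.exp (lam * ψ x) * wD K ψ x k := by
  rw [fderiv_qI_xi K ψ hψ]
  rfl

lemma T2eq {d : ℕ} (K : EuclideanSpace ℝ (Fin d) → Matrix (Fin d) (Fin d) ℝ)
    (hK : ∀ i j : Fin d, ContDiff ℝ (⊤ : ℕ∞) fun x => K x i j)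
    (ψ : EuclideanSpace ℝ (Fin d) → ℝ) (hψ : ContDiff ℝ (⊤ : ℕ∞) ψ)
    (lam : ℝ) (x ξ : EuclideanSpace ℝ (Fin d)) (k : Fin d) :
    fderiv ℝ (fun y => carlemanQI K ψ lam y ξ) x (EuclideanSpace.single k 1)
    = 2 * lam * Real.exp (lam * ψ x) * (lam * pD ψ x k * bD K ψ x ξ + RD K ψ x ξ k) := by
  rw [fderiv_qI_x K hK ψ hψ]
  congr 1
  unfold bD RD
  unfold pD ppD dKD
  rw [Finset.mul_sum, ← Finset.sum_add_distrib]
  refine Finset.sum_congr rfl fun i _ => ?_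
  rw [Finset.mul_sum, ← Finset.sum_add_distrib]
  refine Finset.sum_congr rfl fun j _ => ?_
  ring

lemma T3eq {d : ℕ} (K : EuclideanSpace ℝ (Fin d) → Matrix (Fin d) (Fin d) ℝ)
    (hK : ∀ i j : Fin d, ContDiff ℝ (⊤ : ℕ∞) fun x => K x i j)
    (ψ : EuclideanSpace ℝ (Fin d) → ℝ) (hψ : ContDiff ℝ (⊤ : ℕ∞) ψ)
    (lam : ℝ) (x ξ : EuclideanSpace ℝ (Fin d)) (k : Fin d) :
    fderiv ℝ (fun y => carlemanQR K ψ lam y ξ) x (EuclideanSpace.single k 1)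
    = SD K x ξ k - (2 * lam ^ 3 * Real.exp (lam * ψ x) ^ 2 * pD ψ x k * QD K ψ x
        + lam ^ 2 * Real.exp (lam * ψ x) ^ 2 * UD K ψ x k) := by
  rw [fderiv_qR_x K hK ψ hψ]
  unfold SD QD UD pD ppD dKD
  rfl

-- ==================== the bracket formula ====================

lemma PB_eq {d : ℕ} (K : EuclideanSpace ℝ (Fin d) → Matrix (Fin d) (Fin d) ℝ)
    (hsymm : ∀ x, (K x).IsSymm)
    (hK : ∀ i j : Fin d, ContDiff ℝ (⊤ : ℕ∞) fun x => K x i j)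
    (ψ : EuclideanSpace ℝ (Fin d) → ℝ) (hψ : ContDiff ℝ (⊤ : ℕ∞) ψ)
    (lam : ℝ) (x ξ : EuclideanSpace ℝ (Fin d)) :
    poissonBracket (carlemanQR K ψ lam) (carlemanQI K ψ lam) x ξ
    = 4 * lam ^ 4 * Real.exp (lam * ψ x) ^ 3 * QD K ψ x ^ 2
      + 4 * lam ^ 2 * Real.exp (lam * ψ x) * bD K ψ x ξ ^ 2
      + 4 * lam * Real.exp (lam * ψ x) * (∑ k, vD K x ξ k * RD K ψ x ξ k)
      - 2 * lam * Real.exp (lam * ψ x) * (∑ k, wD K ψ x k * SD K x ξ k)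
      + 2 * lam ^ 3 * Real.exp (lam * ψ x) ^ 3 * (∑ k, wD K ψ x k * UD K ψ x k) := by
  have hψd : Differentiable ℝ ψ := hψ.differentiable (by simp)
  have hb : ∑ k, vD K x ξ k * pD ψ x k = bD K ψ x ξ := by
    unfold vD bD
    simp only [Finset.sum_mul]
    exact Finset.sum_congr rfl fun k _ => Finset.sum_congr rfl fun j _ => by ring
  have hq : ∑ k, wD K ψ x k * pD ψ x k = QD K ψ x := by
    unfold wD QD
    simp only [Finset.sum_mul]
    rw [Finset.sum_comm]
  have h0 : poissonBracket (carlemanQR K ψ lam) (carlemanQI K ψ lam) x ξ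
      = ∑ k, ((2 * vD K x ξ k) *
          (2 * lam * Real.exp (lam * ψ x) * (lam * pD ψ x k * bD K ψ x ξ + RD K ψ x ξ k))
        - (SD K x ξ k - (2 * lam ^ 3 * Real.exp (lam * ψ x) ^ 2 * pD ψ x k * QD K ψ x
            + lam ^ 2 * Real.exp (lam * ψ x) ^ 2 * UD K ψ x k)) *
          (2 * lam * Real.exp (lam * ψ x) * wD K ψ x k)) := by
    unfold poissonBracket
    refine Finset.sum_congr rfl fun k _ => ?_
    rw [T1eq K (hsymm x) ψ lam ξ k, T2eq K hK ψ hψ lam x ξ k,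
      T3eq K hK ψ hψ lam x ξ k, T4eq K ψ hψd lam x ξ k]
  rw [h0]
  have h1 : ∀ k : Fin d, ((2 * vD K x ξ k) *
          (2 * lam * Real.exp (lam * ψ x) * (lam * pD ψ x k * bD K ψ x ξ + RD K ψ x ξ k))
        - (SD K x ξ k - (2 * lam ^ 3 * Real.exp (lam * ψ x) ^ 2 * pD ψ x k * QD K ψ x
            + lam ^ 2 * Real.exp (lam * ψ x) ^ 2 * UD K ψ x k)) *
          (2 * lam * Real.exp (lam * ψ x) * wD K ψ x k))
      = 4 * lam ^ 2 * Real.exp (lam * ψ x) * bD K ψ x ξ * (vD K x ξ k * pD ψ x k)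
        + 4 * lam * Real.exp (lam * ψ x) * (vD K x ξ k * RD K ψ x ξ k)
        - 2 * lam * Real.exp (lam * ψ x) * (wD K ψ x k * SD K x ξ k)
        + 4 * lam ^ 4 * Real.exp (lam * ψ x) ^ 3 * QD K ψ x * (wD K ψ x k * pD ψ x k)
        + 2 * lam ^ 3 * Real.exp (lam * ψ x) ^ 3 * (wD K ψ x k * UD K ψ x k) :=
    fun k => by ring
  rw [Finset.sum_congr rfl fun k _ => h1 k]
  simp only [Finset.sum_add_distrib, Finset.sum_sub_distrib, ← Finset.mul_sum]
  rw [hb, hq]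
  ring


set_option maxHeartbeats 1000000 in
/-- Let `K` be a uniformly elliptic smooth metric and `ψ` a `C_b^∞`
function. For `φ = e^{λψ}` and the Carleman symbols `q_R, q_I`, there is a constant
`C > 0` such that for every `λ ≥ 1` and every `(x,ξ)`:
`{q_R, q_I}(x,ξ) ≥ λ⁴ e^{3λψ(x)} (∇ψ(x)ᵀK(x)∇ψ(x))² − C (‖ξ‖² λ e^{λψ(x)} + λ³ e^{3λψ(x)})`. -/
theorem stmt11 {d : ℕ}
    (K : EuclideanSpace ℝ (Fin d) → Matrix (Fin d) (Fin d) ℝ)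
    (hKsymm : ∀ x, (K x).IsSymm)
    (hKsmooth : ∀ i j : Fin d, ContDiff ℝ (⊤ : ℕ∞) fun x => K x i j)
    (hKbdd : ∀ i j : Fin d, ∀ n : ℕ, ∃ C : ℝ,
      ∀ x, ‖iteratedFDeriv ℝ n (fun y => K y i j) x‖ ≤ C)
    (Kinf Ksup : ℝ) (hKinf : 0 < Kinf) (hKK : Kinf ≤ Ksup)
    (hell : ∀ x ξ : EuclideanSpace ℝ (Fin d),
      Kinf * ‖ξ‖ ^ 2 ≤ quadForm K x ξ ∧ quadForm K x ξ ≤ Ksup * ‖ξ‖ ^ 2)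
    (ψ : EuclideanSpace ℝ (Fin d) → ℝ)
    (hψ : ContDiff ℝ (⊤ : ℕ∞) ψ)
    (hψbdd : ∀ n : ℕ, ∃ C : ℝ, ∀ x, ‖iteratedFDeriv ℝ n ψ x‖ ≤ C) :
    ∃ C : ℝ, 0 < C ∧ ∀ lam : ℝ, 1 ≤ lam → ∀ x ξ : EuclideanSpace ℝ (Fin d),
      lam ^ 4 * Real.exp (3 * lam * ψ x) * quadForm K x (gradient ψ x) ^ 2 -
          C * (‖ξ‖ ^ 2 * lam * Real.exp (lam * ψ x) +
            lam ^ 3 * Real.exp (3 * lam * ψ x)) ≤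
        poissonBracket (carlemanQR K ψ lam) (carlemanQI K ψ lam) x ξ := by
  classical
  -- uniform bounds
  choose CK0 hCK0 using fun i j : Fin d => hKbdd i j 0
  choose CK1 hCK1 using fun i j : Fin d => hKbdd i j 1
  obtain ⟨Cψ1, hCψ1⟩ := hψbdd 1
  obtain ⟨Cψ2, hCψ2⟩ := hψbdd 2
  set M : ℝ := (∑ i, ∑ j, |CK0 i j|) + (∑ i, ∑ j, |CK1 i j|) + |Cψ1| + |Cψ2| + 1 with hMdef
  have hsum0 : (0:ℝ) ≤ ∑ i, ∑ j, |CK0 i j| :=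
    Finset.sum_nonneg fun i _ => Finset.sum_nonneg fun j _ => abs_nonneg _
  have hsum1 : (0:ℝ) ≤ ∑ i, ∑ j, |CK1 i j| :=
    Finset.sum_nonneg fun i _ => Finset.sum_nonneg fun j _ => abs_nonneg _
  have hM1 : (1:ℝ) ≤ M := by
    rw [hMdef]
    have := abs_nonneg Cψ1; have := abs_nonneg Cψ2
    linarith
  have hM0 : (0:ℝ) ≤ M := zero_le_one.trans hM1
  have hCK0le : ∀ i j : Fin d, CK0 i j ≤ M := by
    intro i j
    have h1 : |CK0 i j| ≤ ∑ i', ∑ j', |CK0 i' j'| := by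
      calc |CK0 i j| ≤ ∑ j', |CK0 i j'| :=
            Finset.single_le_sum (f := fun j' => |CK0 i j'|) (fun _ _ => abs_nonneg _)
              (Finset.mem_univ j)
        _ ≤ ∑ i', ∑ j', |CK0 i' j'| :=
            Finset.single_le_sum (f := fun i' => ∑ j', |CK0 i' j'|)
              (fun _ _ => Finset.sum_nonneg fun _ _ => abs_nonneg _) (Finset.mem_univ i)
    have := le_abs_self (CK0 i j)
    have := abs_nonneg Cψ1; have := abs_nonneg Cψ2
    rw [hMdef]; linarith
  have hCK1le : ∀ i j : Fin d, CK1 i j ≤ M := by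
    intro i j
    have h1 : |CK1 i j| ≤ ∑ i', ∑ j', |CK1 i' j'| := by
      calc |CK1 i j| ≤ ∑ j', |CK1 i j'| :=
            Finset.single_le_sum (f := fun j' => |CK1 i j'|) (fun _ _ => abs_nonneg _)
              (Finset.mem_univ j)
        _ ≤ ∑ i', ∑ j', |CK1 i' j'| :=
            Finset.single_le_sum (f := fun i' => ∑ j', |CK1 i' j'|)
              (fun _ _ => Finset.sum_nonneg fun _ _ => abs_nonneg _) (Finset.mem_univ i)
    have := le_abs_self (CK1 i j)
    have := abs_nonneg Cψ1; have := abs_nonneg Cψ2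
    rw [hMdef]; linarith
  have hCψ1le : Cψ1 ≤ M := by
    have := le_abs_self Cψ1; have := abs_nonneg Cψ2
    rw [hMdef]; linarith
  have hCψ2le : Cψ2 ≤ M := by
    have := le_abs_self Cψ2; have := abs_nonneg Cψ1
    rw [hMdef]; linarith
  have hsingle : ∀ k : Fin d, ‖(EuclideanSpace.single k (1:ℝ))‖ ≤ 1 := by
    intro k
    rw [EuclideanSpace.norm_single]
    simp
  -- pointwise bounds
  have hKb : ∀ (x : EuclideanSpace ℝ (Fin d)) (i j : Fin d), |K x i j| ≤ M := by
    intro x i j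
    have h := hCK0 i j x
    rw [norm_iteratedFDeriv_zero] at h
    calc |K x i j| = ‖K x i j‖ := (Real.norm_eq_abs _).symm
      _ ≤ CK0 i j := h
      _ ≤ M := hCK0le i j
  have hdKb : ∀ (x : EuclideanSpace ℝ (Fin d)) (i j k : Fin d), |dKD K x i j k| ≤ M := by
    intro x i j k
    calc |dKD K x i j k| ≤ ‖iteratedFDeriv ℝ 1 (fun y => K y i j) x‖ :=
          abs_fderiv_le _ x _ (hsingle k)
      _ ≤ CK1 i j := hCK1 i j x
      _ ≤ M := hCK1le i j
  have hpb : ∀ (x : EuclideanSpace ℝ (Fin d)) (i : Fin d), |pD ψ x i| ≤ M := by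
    intro x i
    calc |pD ψ x i| ≤ ‖iteratedFDeriv ℝ 1 ψ x‖ := abs_fderiv_le _ x _ (hsingle i)
      _ ≤ Cψ1 := hCψ1 x
      _ ≤ M := hCψ1le
  have hppb : ∀ (x : EuclideanSpace ℝ (Fin d)) (i k : Fin d), |ppD ψ x i k| ≤ M := by
    intro x i k
    calc |ppD ψ x i k| ≤ ‖iteratedFDeriv ℝ 2 ψ x‖ :=
          abs_fderiv2_le ψ hψ x _ _ (hsingle k) (hsingle i)
      _ ≤ Cψ2 := hCψ2 x
      _ ≤ M := hCψ2le
  refine ⟨16 * ((d : ℝ) + 1) ^ 4 * M ^ 5, by positivity, ?_⟩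
  intro lam hlam x ξ
  have hlam0 : (0:ℝ) < lam := lt_of_lt_of_le zero_lt_one hlam
  have hE : (0:ℝ) < Real.exp (lam * ψ x) := Real.exp_pos _
  -- rewrite goal
  have hE3 : Real.exp (3 * lam * ψ x) = Real.exp (lam * ψ x) ^ 3 := by
    rw [show (3:ℝ) * lam * ψ x = lam * ψ x + lam * ψ x + lam * ψ x by ring,
      Real.exp_add, Real.exp_add]
    ring
  have hQgrad : quadForm K x (gradient ψ x) = QD K ψ x := by
    unfold quadForm QD pD
    exact Finset.sum_congr rfl fun i _ => Finset.sum_congr rfl fun j _ => by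
      rw [grad_coord, grad_coord]
  rw [hE3, hQgrad, PB_eq K hKsymm hKsmooth ψ hψ lam x ξ]
  -- bounds on the sums
  have hξc : ∀ j : Fin d, |ξ j| ≤ ‖ξ‖ := fun j => coord_le_norm ξ j
  have hv : ∀ k, |vD K x ξ k| ≤ (d:ℝ) * (M * ‖ξ‖) := by
    intro k
    exact absum _ _ fun j => abs_mul_le (hKb x k j) (hξc j)
  have hw : ∀ k, |wD K ψ x k| ≤ (d:ℝ) * (M * M) := by
    intro k
    exact absum _ _ fun i => abs_mul_le (hpb x i) (hKb x i k)
  have hR : ∀ k, |RD K ψ x ξ k| ≤ (d:ℝ) * ((d:ℝ) * ((M * M + M * M) * ‖ξ‖)) := by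
    intro k
    refine absum _ _ fun i => absum _ _ fun j => ?_
    refine abs_mul_le ?_ (hξc j)
    calc |ppD ψ x i k * K x i j + pD ψ x i * dKD K x i j k|
        ≤ |ppD ψ x i k * K x i j| + |pD ψ x i * dKD K x i j k| := abs_add_le _ _
      _ ≤ M * M + M * M :=
          add_le_add (abs_mul_le (hppb x i k) (hKb x i j))
            (abs_mul_le (hpb x i) (hdKb x i j k))
  have hS : ∀ k, |SD K x ξ k| ≤ (d:ℝ) * ((d:ℝ) * (‖ξ‖ * M * ‖ξ‖)) := by
    intro k
    exact absum _ _ fun i => absum _ _ fun j =>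
      abs_mul_le (abs_mul_le (hξc i) (hdKb x i j k)) (hξc j)
  have hU : ∀ k, |UD K ψ x k| ≤ (d:ℝ) * ((d:ℝ) * (M * M * M + M * M * M + M * M * M)) := by
    intro k
    refine absum _ _ fun i => absum _ _ fun j => ?_
    calc |ppD ψ x i k * K x i j * pD ψ x j + pD ψ x i * dKD K x i j k * pD ψ x j
          + pD ψ x i * K x i j * ppD ψ x j k|
        ≤ |ppD ψ x i k * K x i j * pD ψ x j + pD ψ x i * dKD K x i j k * pD ψ x j|
          + |pD ψ x i * K x i j * ppD ψ x j k| := abs_add_le _ _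
      _ ≤ (|ppD ψ x i k * K x i j * pD ψ x j| + |pD ψ x i * dKD K x i j k * pD ψ x j|)
          + |pD ψ x i * K x i j * ppD ψ x j k| := by
            have := abs_add_le (ppD ψ x i k * K x i j * pD ψ x j)
              (pD ψ x i * dKD K x i j k * pD ψ x j)
            linarith
      _ ≤ (M * M * M + M * M * M) + M * M * M := by
            refine add_le_add (add_le_add ?_ ?_) ?_
            · exact abs_mul_le (abs_mul_le (hppb x i k) (hKb x i j)) (hpb x j)
            · exact abs_mul_le (abs_mul_le (hpb x i) (hdKb x i j k)) (hpb x j)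
            · exact abs_mul_le (abs_mul_le (hpb x i) (hKb x i j)) (hppb x j k)
      _ = M * M * M + M * M * M + M * M * M := by ring
  -- clean bounds
  have hξ0 : (0:ℝ) ≤ ‖ξ‖ := norm_nonneg _
  have hd0 : (0:ℝ) ≤ (d:ℝ) := Nat.cast_nonneg _
  have hSvr : |∑ k, vD K x ξ k * RD K ψ x ξ k| ≤ 2 * (d:ℝ)^4 * M^3 * ‖ξ‖^2 := by
    calc |∑ k, vD K x ξ k * RD K ψ x ξ k|
        ≤ (d:ℝ) * (((d:ℝ) * (M * ‖ξ‖)) * ((d:ℝ) * ((d:ℝ) * ((M * M + M * M) * ‖ξ‖)))) :=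
          absum _ _ fun k => abs_mul_le (hv k) (hR k)
      _ = 2 * (d:ℝ)^4 * M^3 * ‖ξ‖^2 := by ring
  have hSws : |∑ k, wD K ψ x k * SD K x ξ k| ≤ (d:ℝ)^4 * M^3 * ‖ξ‖^2 := by
    calc |∑ k, wD K ψ x k * SD K x ξ k|
        ≤ (d:ℝ) * (((d:ℝ) * (M * M)) * ((d:ℝ) * ((d:ℝ) * (‖ξ‖ * M * ‖ξ‖)))) :=
          absum _ _ fun k => abs_mul_le (hw k) (hS k)
      _ = (d:ℝ)^4 * M^3 * ‖ξ‖^2 := by ring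
  have hSwu : |∑ k, wD K ψ x k * UD K ψ x k| ≤ 3 * (d:ℝ)^4 * M^5 := by
    calc |∑ k, wD K ψ x k * UD K ψ x k|
        ≤ (d:ℝ) * (((d:ℝ) * (M * M)) * ((d:ℝ) * ((d:ℝ) * (M * M * M + M * M * M + M * M * M)))) :=
          absum _ _ fun k => abs_mul_le (hw k) (hU k)
      _ = 3 * (d:ℝ)^4 * M^5 := by ring
  -- final assembly
  set E := Real.exp (lam * ψ x) with hEdef
  have h1 : -(8 * (d:ℝ)^4 * M^3 * (‖ξ‖^2 * lam * E)) ≤ 4 * lam * E * (∑ k, vD K x ξ k * RD K ψ x ξ k) := by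
    calc -(8 * (d:ℝ)^4 * M^3 * (‖ξ‖^2 * lam * E))
        = (4 * (lam * E)) * (-(2 * (d:ℝ)^4 * M^3 * ‖ξ‖^2)) := by ring
      _ ≤ (4 * (lam * E)) * (∑ k, vD K x ξ k * RD K ψ x ξ k) := by
          apply mul_le_mul_of_nonneg_left _ (by positivity)
          have := neg_abs_le (∑ k, vD K x ξ k * RD K ψ x ξ k)
          linarith
      _ = 4 * lam * E * (∑ k, vD K x ξ k * RD K ψ x ξ k) := by ring
  have h2 : 2 * lam * E * (∑ k, wD K ψ x k * SD K x ξ k) ≤ 2 * (d:ℝ)^4 * M^3 * (‖ξ‖^2 * lam * E) := by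
    calc 2 * lam * E * (∑ k, wD K ψ x k * SD K x ξ k)
        = (2 * (lam * E)) * (∑ k, wD K ψ x k * SD K x ξ k) := by ring
      _ ≤ (2 * (lam * E)) * ((d:ℝ)^4 * M^3 * ‖ξ‖^2) := by
          apply mul_le_mul_of_nonneg_left _ (by positivity)
          have := le_abs_self (∑ k, wD K ψ x k * SD K x ξ k)
          linarith
      _ = 2 * (d:ℝ)^4 * M^3 * (‖ξ‖^2 * lam * E) := by ring
  have h3 : -(6 * (d:ℝ)^4 * M^5 * (lam^3 * E^3)) ≤ 2 * lam^3 * E^3 * (∑ k, wD K ψ x k * UD K ψ x k) := by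
    calc -(6 * (d:ℝ)^4 * M^5 * (lam^3 * E^3))
        = (2 * (lam^3 * E^3)) * (-(3 * (d:ℝ)^4 * M^5)) := by ring
      _ ≤ (2 * (lam^3 * E^3)) * (∑ k, wD K ψ x k * UD K ψ x k) := by
          apply mul_le_mul_of_nonneg_left _ (by positivity)
          have := neg_abs_le (∑ k, wD K ψ x k * UD K ψ x k)
          linarith
      _ = 2 * lam^3 * E^3 * (∑ k, wD K ψ x k * UD K ψ x k) := by ring
  have hd4 : (d:ℝ)^4 ≤ ((d:ℝ)+1)^4 := by
    apply pow_le_pow_left₀ hd0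
    linarith
  have hM35 : M^3 ≤ M^5 := pow_le_pow_right₀ hM1 (by norm_num)
  have hX1 : (0:ℝ) ≤ ‖ξ‖^2 * lam * E := by positivity
  have hX2 : (0:ℝ) ≤ lam^3 * E^3 := by positivity
  have hC1 : 10 * (d:ℝ)^4 * M^3 ≤ 16 * ((d:ℝ)+1)^4 * M^5 :=
    mul_le_mul (mul_le_mul (by norm_num) hd4 (by positivity) (by norm_num)) hM35
      (by positivity) (by positivity)
  have hC2 : 6 * (d:ℝ)^4 * M^5 ≤ 16 * ((d:ℝ)+1)^4 * M^5 :=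
    mul_le_mul_of_nonneg_right
      (mul_le_mul (by norm_num) hd4 (by positivity) (by norm_num)) (by positivity)
  have hCX1 : 10 * (d:ℝ)^4 * M^3 * (‖ξ‖^2 * lam * E) ≤ 16 * ((d:ℝ)+1)^4 * M^5 * (‖ξ‖^2 * lam * E) :=
    mul_le_mul_of_nonneg_right hC1 hX1
  have hCX2 : 6 * (d:ℝ)^4 * M^5 * (lam^3 * E^3) ≤ 16 * ((d:ℝ)+1)^4 * M^5 * (lam^3 * E^3) :=
    mul_le_mul_of_nonneg_right hC2 hX2
  have hG : (0:ℝ) ≤ lam^4 * E^3 * QD K ψ x ^ 2 := by positivity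
  have hH : (0:ℝ) ≤ 4 * lam^2 * E * bD K ψ x ξ ^ 2 := by positivity
  linarith [h1, h2, h3, hCX1, hCX2, hG, hH]
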